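/- arXiv:1011.5677 — 5 statements merged into one kernel-verified Lean document; each statement's English description precedes it below -/
import Mathlib

section
/- Let X be a compact subset of ℝ, A a lattice, F a lattice of parameters. Suppose U(x|f) is bounded, nondecreasing in x, and has increasing differences in x and f. Suppose the transition kernel P(·|x,a,f) is a family of Borel probability measures on X that is stochastically nondecreasing in x, a, and f, stochastically supermodular in (x,a), and has stochastically increasing differences in (x,a) and f. Then T(x,a,f) = ∫ U(x'|f) P(dx'|x,a,f) is nondecreasing in x and a, supermodular in (x,a), and has increasing differences in (x,a) and f. -/
/-! The first three claims are the defining properties of `P`, tested on the bounded nondecreasing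
function `U(·|f)`. For increasing differences, stochastic increasing differences of `P` tested on
`U(·|f)` moves the parameter from `f` to `f'` in the measure, and since `U(·|f') - U(·|f)` is
nondecreasing (increasing differences of `U`), stochastic monotonicity of `P` in `(x, a)` moves it
to `f'` in the integrand as well. -/

open MeasureTheory Set

lemma monotone_sub_of_increasing_differences {α β : Type*} [Preorder α] [Preorder β]
    {U : α → β → ℝ} (hU : ∀ x x' f f', x ≤ x' → f ≤ f' → U x' f - U x f ≤ U x' f' - U x f')
    {f f' : β} (hf : f ≤ f') : Monotone fun x => U x f' - U x f :=
  fun x x' hx => by linarith [hU x x' f f' hx hf]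

theorem stmt_4_general {A F : Type*} [Lattice A] [Lattice F]
    (P : ℝ → A → F → Measure ℝ)
    (hPprob : ∀ x a f, IsProbabilityMeasure (P x a f))
    -- stochastically nondecreasing in x, a and f
    (hPmono : ∀ (φ : ℝ → ℝ), Measurable φ → Monotone φ → (∃ C, ∀ z, |φ z| ≤ C) →
      ∀ x x' (a a' : A) (f f' : F), x ≤ x' → a ≤ a' → f ≤ f' →
        ∫ z, φ z ∂(P x a f) ≤ ∫ z, φ z ∂(P x' a' f'))
    -- stochastically supermodular in (x,a)
    (hPsm : ∀ (φ : ℝ → ℝ), Measurable φ → Monotone φ → (∃ C, ∀ z, |φ z| ≤ C) →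
      ∀ x x' (a a' : A) (f : F),
        ∫ z, φ z ∂(P x a f) + ∫ z, φ z ∂(P x' a' f) ≤
          ∫ z, φ z ∂(P (max x x') (a ⊔ a') f) + ∫ z, φ z ∂(P (min x x') (a ⊓ a') f))
    -- stochastically increasing differences in (x,a) and f
    (hPid : ∀ (φ : ℝ → ℝ), Measurable φ → Monotone φ → (∃ C, ∀ z, |φ z| ≤ C) →
      ∀ x x' (a a' : A) (f f' : F), x ≤ x' → a ≤ a' → f ≤ f' →
        ∫ z, φ z ∂(P x' a' f) - ∫ z, φ z ∂(P x a f) ≤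
          ∫ z, φ z ∂(P x' a' f') - ∫ z, φ z ∂(P x a f'))
    (U : ℝ → F → ℝ)
    (hUb : ∃ C, ∀ x f, |U x f| ≤ C)
    (hUmeas : ∀ f, Measurable (fun x => U x f))
    (hUmono : ∀ f, Monotone (fun x => U x f))
    (hUid : ∀ (x x' : ℝ) (f f' : F), x ≤ x' → f ≤ f' →
      U x' f - U x f ≤ U x' f' - U x f') :
    -- T(x,a,f) = ∫ U(x'|f) P(dx'|x,a,f)
    (∀ (a : A) (f : F), Monotone (fun x => ∫ z, U z f ∂(P x a f))) ∧
    (∀ (x : ℝ) (f : F), Monotone (fun a => ∫ z, U z f ∂(P x a f))) ∧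
    (∀ (x x' : ℝ) (a a' : A) (f : F),
      ∫ z, U z f ∂(P x a f) + ∫ z, U z f ∂(P x' a' f) ≤
        ∫ z, U z f ∂(P (max x x') (a ⊔ a') f) + ∫ z, U z f ∂(P (min x x') (a ⊓ a') f)) ∧
    (∀ (x x' : ℝ) (a a' : A) (f f' : F), x ≤ x' → a ≤ a' → f ≤ f' →
      ∫ z, U z f ∂(P x' a' f) - ∫ z, U z f ∂(P x a f) ≤
        ∫ z, U z f' ∂(P x' a' f') - ∫ z, U z f' ∂(P x a f')) := by
  obtain ⟨C, hC⟩ := hUb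
  have hUbdd : ∀ f, ∃ C, ∀ z, |U z f| ≤ C := fun f => ⟨C, fun z => hC z f⟩
  have hUint : ∀ x a f f', Integrable (fun z => U z f) (P x a f') := fun x a f f' =>
    have := hPprob x a f'
    .of_bound (hUmeas f).aestronglyMeasurable C (.of_forall fun z => hC z f)
  refine ⟨fun a f x x' hx => hPmono _ (hUmeas f) (hUmono f) (hUbdd f) x x' a a f f hx le_rfl le_rfl,
    fun x f a a' ha => hPmono _ (hUmeas f) (hUmono f) (hUbdd f) x x a a' f f le_rfl ha le_rfl,
    fun x x' a a' f => hPsm _ (hUmeas f) (hUmono f) (hUbdd f) x x' a a' f,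
    fun x x' a a' f f' hx ha hf => ?_⟩
  have hgap_bdd : ∃ C, ∀ z, |U z f' - U z f| ≤ C :=
    ⟨C + C, fun z => (abs_sub _ _).trans (add_le_add (hC z f') (hC z f))⟩
  have hgap : ∫ z, U z f' - U z f ∂(P x a f') ≤ ∫ z, U z f' - U z f ∂(P x' a' f') :=
    hPmono _ ((hUmeas f').sub (hUmeas f)) (monotone_sub_of_increasing_differences hUid hf)
      hgap_bdd x x' a a' f' f' hx ha le_rfl
  rw [integral_sub (hUint ..) (hUint ..), integral_sub (hUint ..) (hUint ..)] at hgap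
  linarith [hPid _ (hUmeas f) (hUmono f) (hUbdd f) x x' a a' f f' hx ha hf]

theorem stmt_4 {A F : Type*} [Lattice A] [Lattice F]
    (X : Set ℝ) (hX : IsCompact X)
    (P : ℝ → A → F → Measure ℝ)
    (hPprob : ∀ x a f, IsProbabilityMeasure (P x a f))
    (hPsupp : ∀ x a f, P x a f Xᶜ = 0)
    -- stochastically nondecreasing in x, a and f
    (hPmono : ∀ (φ : ℝ → ℝ), Measurable φ → Monotone φ → (∃ C, ∀ z, |φ z| ≤ C) →
      ∀ x x' (a a' : A) (f f' : F), x ≤ x' → a ≤ a' → f ≤ f' →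
        ∫ z, φ z ∂(P x a f) ≤ ∫ z, φ z ∂(P x' a' f'))
    -- stochastically supermodular in (x,a)
    (hPsm : ∀ (φ : ℝ → ℝ), Measurable φ → Monotone φ → (∃ C, ∀ z, |φ z| ≤ C) →
      ∀ x x' (a a' : A) (f : F),
        ∫ z, φ z ∂(P x a f) + ∫ z, φ z ∂(P x' a' f) ≤
          ∫ z, φ z ∂(P (max x x') (a ⊔ a') f) + ∫ z, φ z ∂(P (min x x') (a ⊓ a') f))
    -- stochastically increasing differences in (x,a) and f
    (hPid : ∀ (φ : ℝ → ℝ), Measurable φ → Monotone φ → (∃ C, ∀ z, |φ z| ≤ C) →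
      ∀ x x' (a a' : A) (f f' : F), x ≤ x' → a ≤ a' → f ≤ f' →
        ∫ z, φ z ∂(P x' a' f) - ∫ z, φ z ∂(P x a f) ≤
          ∫ z, φ z ∂(P x' a' f') - ∫ z, φ z ∂(P x a f'))
    (U : ℝ → F → ℝ)
    (hUb : ∃ C, ∀ x f, |U x f| ≤ C)
    (hUmeas : ∀ f, Measurable (fun x => U x f))
    (hUmono : ∀ f, Monotone (fun x => U x f))
    (hUid : ∀ (x x' : ℝ) (f f' : F), x ≤ x' → f ≤ f' →
      U x' f - U x f ≤ U x' f' - U x f') :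
    -- T(x,a,f) = ∫ U(x'|f) P(dx'|x,a,f)
    (∀ (a : A) (f : F), Monotone (fun x => ∫ z, U z f ∂(P x a f))) ∧
    (∀ (x : ℝ) (f : F), Monotone (fun a => ∫ z, U z f ∂(P x a f))) ∧
    (∀ (x x' : ℝ) (a a' : A) (f : F),
      ∫ z, U z f ∂(P x a f) + ∫ z, U z f ∂(P x' a' f) ≤
        ∫ z, U z f ∂(P (max x x') (a ⊔ a') f) + ∫ z, U z f ∂(P (min x x') (a ⊓ a') f)) ∧
    (∀ (x x' : ℝ) (a a' : A) (f f' : F), x ≤ x' → a ≤ a' → f ≤ f' →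
      ∫ z, U z f ∂(P x' a' f) - ∫ z, U z f ∂(P x a f) ≤
        ∫ z, U z f' ∂(P x' a' f') - ∫ z, U z f' ∂(P x a f')) :=
  stmt_4_general P hPprob hPmono hPsm hPid U hUb hUmeas hUmono hUid
end

section
/- Let X, A be compact subsets of ℝ and F a lattice. Suppose W(x,a,f) is supermodular in (x,a), has increasing differences in (x,a) and f, and the feasible action correspondence A(x) ⊆ A is nondecreasing in x with each A(x) compact and the supremum over a ∈ A(x) of W(x,a,f) attained. Then U*(x|f) = sup_{a ∈ A(x)} W(x,a,f) has increasing differences in x and f. -/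
/-!
Topkis' argument. Take `a'` optimal at `(x', f)` and `a` optimal at `(x, f')`. Since `a ⊓ a'` is
feasible at `x` and `a ⊔ a'` at `x'`, supermodularity in `(x, a)` bounds the increase
`U x' f - U x f` by `W x' (a ⊔ a') f - W x a f`; increasing differences in `((x, a), f)` carry this
to `f'`, where it is at most `U x' f' - U x f'`.
-/

open Set

theorem isGreatest_image_of_forall_le {α : Type*} {s : Set α} {g : α → ℝ} {a : α} (ha : a ∈ s)
    (hmax : ∀ b ∈ s, g b ≤ g a) : IsGreatest (g '' s) (g a) :=
  ⟨mem_image_of_mem g ha, forall_mem_image.2 hmax⟩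

theorem sub_le_sub_of_isGreatest_image {X L F : Type*} [Preorder X] [Lattice L] [Preorder F]
    {W : X → L → F → ℝ} {S : X → Set L} {U : X → F → ℝ}
    (hsm : ∀ x x' a a' f, x ≤ x' → W x a f + W x' a' f ≤ W x' (a ⊔ a') f + W x (a ⊓ a') f)
    (hid : ∀ x x' a a' f f', x ≤ x' → a ≤ a' → f ≤ f' →
      W x' a' f - W x a f ≤ W x' a' f' - W x a f')
    (hS : ∀ x x', x ≤ x' → ∀ a ∈ S x, ∀ a' ∈ S x', a ⊔ a' ∈ S x' ∧ a ⊓ a' ∈ S x)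
    (hU : ∀ x f, IsGreatest ((W x · f) '' S x) (U x f))
    {x x' : X} {f f' : F} (hx : x ≤ x') (hf : f ≤ f') :
    U x' f - U x f ≤ U x' f' - U x f' := by
  obtain ⟨⟨a', ha', hUa'⟩, -⟩ := hU x' f
  obtain ⟨⟨a, ha, hUa⟩, -⟩ := hU x f'
  obtain ⟨hsup, hinf⟩ := hS x x' hx a ha a' ha'
  have hinf_le : W x (a ⊓ a') f ≤ U x f := (hU x f).2 (mem_image_of_mem _ hinf)
  have hsup_le : W x' (a ⊔ a') f' ≤ U x' f' := (hU x' f').2 (mem_image_of_mem _ hsup)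
  calc U x' f - U x f
      ≤ W x' a' f - W x (a ⊓ a') f := by rw [← hUa']; linarith
    _ ≤ W x' (a ⊔ a') f - W x a f := by linarith [hsm x x' a a' f hx]
    _ ≤ W x' (a ⊔ a') f' - W x a f' := hid x x' a (a ⊔ a') f f' hx le_sup_left hf
    _ ≤ U x' f' - U x f' := by rw [← hUa]; linarith

theorem stmt_5_general {F : Type*} [Lattice F]
    (W : ℝ → ℝ → F → ℝ)
    -- supermodular in (x,a)
    (hWsm : ∀ (x x' a a' : ℝ) (f : F),
      W x a f + W x' a' f ≤ W (max x x') (max a a') f + W (min x x') (min a a') f)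
    -- increasing differences in (x,a) and f
    (hWid : ∀ (x x' a a' : ℝ) (f f' : F), x ≤ x' → a ≤ a' → f ≤ f' →
      W x' a' f - W x a f ≤ W x' a' f' - W x a f')
    (Acal : ℝ → Set ℝ)
    -- nondecreasing correspondence
    (hAmono : ∀ x x' : ℝ, x ≤ x' → ∀ a ∈ Acal x, ∀ a' ∈ Acal x',
      max a a' ∈ Acal x' ∧ min a a' ∈ Acal x)
    -- the supremum is attained
    (hatt : ∀ (x : ℝ) (f : F), ∃ a ∈ Acal x, ∀ b ∈ Acal x, W x b f ≤ W x a f) :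
    -- U*(x|f) = sup_{a ∈ Acal(x)} W(x,a,f) has increasing differences in x and f
    ∀ (x x' : ℝ) (f f' : F), x ≤ x' → f ≤ f' →
      sSup ((fun a => W x' a f) '' Acal x') - sSup ((fun a => W x a f) '' Acal x) ≤
        sSup ((fun a => W x' a f') '' Acal x') - sSup ((fun a => W x a f') '' Acal x) := by
  intro x x' f f' hx hf
  have hsm : ∀ x x' a a' f, x ≤ x' → W x a f + W x' a' f ≤ W x' (a ⊔ a') f + W x (a ⊓ a') f := by
    intro x x' a a' f hx
    simpa only [max_eq_right hx, min_eq_left hx] using hWsm x x' a a' f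
  have hU : ∀ x f, IsGreatest ((W x · f) '' Acal x) (sSup ((W x · f) '' Acal x)) := by
    intro x f
    obtain ⟨a, ha, hmax⟩ := hatt x f
    have h := isGreatest_image_of_forall_le ha hmax
    rwa [h.csSup_eq]
  exact sub_le_sub_of_isGreatest_image hsm hWid hAmono hU hx hf

theorem stmt_5 {F : Type*} [Lattice F]
    (X A : Set ℝ) (hX : IsCompact X) (hA : IsCompact A)
    (W : ℝ → ℝ → F → ℝ)
    -- supermodular in (x,a)
    (hWsm : ∀ (x x' a a' : ℝ) (f : F),
      W x a f + W x' a' f ≤ W (max x x') (max a a') f + W (min x x') (min a a') f)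
    -- increasing differences in (x,a) and f
    (hWid : ∀ (x x' a a' : ℝ) (f f' : F), x ≤ x' → a ≤ a' → f ≤ f' →
      W x' a' f - W x a f ≤ W x' a' f' - W x a f')
    (Acal : ℝ → Set ℝ)
    (hAsub : ∀ x, Acal x ⊆ A)
    (hAcpt : ∀ x, IsCompact (Acal x))
    -- nondecreasing correspondence
    (hAmono : ∀ x x' : ℝ, x ≤ x' → ∀ a ∈ Acal x, ∀ a' ∈ Acal x',
      max a a' ∈ Acal x' ∧ min a a' ∈ Acal x)
    -- the supremum is attained
    (hatt : ∀ (x : ℝ) (f : F), ∃ a ∈ Acal x, ∀ b ∈ Acal x, W x b f ≤ W x a f) :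
    -- U*(x|f) = sup_{a ∈ Acal(x)} W(x,a,f) has increasing differences in x and f
    ∀ (x x' : ℝ) (f f' : F), x ≤ x' → f ≤ f' →
      sSup ((fun a => W x' a f) '' Acal x') - sSup ((fun a => W x a f) '' Acal x) ≤
        sSup ((fun a => W x' a f') '' Acal x') - sSup ((fun a => W x a f') '' Acal x) :=
  stmt_5_general W hWsm hWid Acal hAmono hatt
end

section
/- Let X ⊆ ℝ be compact, μ, μ' : X → A nondecreasing strategies with μ'(x) ≥ μ(x) for all x, f, f' parameters with f' ⪰ f, and g, g' Borel probability measures on X with g' ⪰_SD g. Suppose the kernel P(·|x,a,f) is stochastically nondecreasing in (x,a) jointly and stochastically nondecreasing in a and f. Then the measure Q_{μ',f'}(g') defined by Q_{μ,f}(g)(S) = ∫ P(S|x,μ(x),f) g(dx) satisfies Q_{μ',f'}(g') ⪰_SD Q_{μ,f}(g). -/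
open MeasureTheory ProbabilityTheory

/-!
Integrate a bounded nondecreasing test function `φ` against `P(·|x,μ(x),f)` to get the
value function `ψ`, so that `∫ φ dQ_{μ,f}(g) = ∫ ψ dg`. Raising the action to `μ'(x)` and the
parameter to `f'` raises `ψ` pointwise to `ψ'`; since `μ'` is nondecreasing and the kernel is
jointly monotone in `(x, a)`, `ψ'` is itself a bounded nondecreasing test function, so
stochastic dominance of `g'` over `g` gives `∫ ψ' dg ≤ ∫ ψ' dg'`.
-/

def StochasticallyLE {α : Type*} [MeasurableSpace α] [Preorder α] (ν ν' : Measure α) : Prop :=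
  ∀ φ : α → ℝ, Measurable φ → Monotone φ → (∃ C, ∀ z, |φ z| ≤ C) →
    ∫ z, φ z ∂ν ≤ ∫ z, φ z ∂ν'

section BoundedIntegrand

variable {α : Type*} [MeasurableSpace α] {ν : Measure α} {φ : α → ℝ} {C : ℝ}

lemma integrable_of_abs_le [IsFiniteMeasure ν] (hφ : Measurable φ) (hC : ∀ z, |φ z| ≤ C) :
    Integrable φ ν :=
  .of_bound hφ.aestronglyMeasurable C (.of_forall fun z => (Real.norm_eq_abs _).trans_le (hC z))

lemma abs_integral_le_of_abs_le [IsProbabilityMeasure ν] (hC : ∀ z, |φ z| ≤ C) :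
    |∫ z, φ z ∂ν| ≤ C := by
  simpa using norm_integral_le_of_norm_le_const (μ := ν)
    (.of_forall fun z => (Real.norm_eq_abs (φ z)).trans_le (hC z))

end BoundedIntegrand

lemma MeasureTheory.Measure.integral_bind {α β : Type*} [MeasurableSpace α] [MeasurableSpace β]
    {μ : Measure α} {κ : Kernel α β} {φ : β → ℝ} (hφ : Integrable φ (μ.bind κ)) :
    ∫ z, φ z ∂(μ.bind κ) = ∫ x, ∫ z, φ z ∂(κ x) ∂μ := by
  rw [Measure.comp_eq_comp_const_apply] at hφ ⊢
  exact Kernel.integral_comp hφ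

section Bind

variable {α β : Type*} [MeasurableSpace α] [Preorder α] [MeasurableSpace β] [Preorder β]

lemma StochasticallyLE.bind {μ μ' : Measure α} [IsProbabilityMeasure μ] [IsProbabilityMeasure μ']
    {κ κ' : Kernel α β} [IsMarkovKernel κ] [IsMarkovKernel κ']
    (hμ : StochasticallyLE μ μ') (hκ : ∀ x, StochasticallyLE (κ x) (κ' x))
    (hκ' : ∀ ⦃x y⦄, x ≤ y → StochasticallyLE (κ' x) (κ' y)) :
    StochasticallyLE (μ.bind κ) (μ'.bind κ') := by
  rintro φ hφ hφ_mono ⟨C, hC⟩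
  set ψ := fun x => ∫ z, φ z ∂(κ x)
  set ψ' := fun x => ∫ z, φ z ∂(κ' x)
  have hψ : Measurable ψ := (hφ.stronglyMeasurable.integral_kernel (κ := κ)).measurable
  have hψ' : Measurable ψ' := (hφ.stronglyMeasurable.integral_kernel (κ := κ')).measurable
  have hψ_bdd : ∀ x, |ψ x| ≤ C := fun x => abs_integral_le_of_abs_le hC
  have hψ'_bdd : ∀ x, |ψ' x| ≤ C := fun x => abs_integral_le_of_abs_le hC
  have hψ'_mono : Monotone ψ' := fun x y hxy => hκ' hxy φ hφ hφ_mono ⟨C, hC⟩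
  rw [Measure.integral_bind (integrable_of_abs_le hφ hC),
    Measure.integral_bind (integrable_of_abs_le hφ hC)]
  calc ∫ x, ψ x ∂μ
      ≤ ∫ x, ψ' x ∂μ := integral_mono (integrable_of_abs_le hψ hψ_bdd)
        (integrable_of_abs_le hψ' hψ'_bdd) fun x => hκ x φ hφ hφ_mono ⟨C, hC⟩
    _ ≤ ∫ x, ψ' x ∂μ' := hμ ψ' hψ' hψ'_mono ⟨C, hψ'_bdd⟩

end Bind

theorem stmt_7_general {A F : Type*} [PartialOrder A] [PartialOrder F]
    (P : ℝ → A → F → Measure ℝ)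
    (hPprob : ∀ x a f, IsProbabilityMeasure (P x a f))
    -- stochastically nondecreasing in (x,a) jointly and in f
    (hPmono : ∀ (φ : ℝ → ℝ), Measurable φ → Monotone φ → (∃ C, ∀ z, |φ z| ≤ C) →
      ∀ (x x' : ℝ) (a a' : A) (f f' : F), x ≤ x' → a ≤ a' → f ≤ f' →
        ∫ z, φ z ∂(P x a f) ≤ ∫ z, φ z ∂(P x' a' f'))
    (μ μ' : ℝ → A) (hμ'mono : Monotone μ')
    (hμle : ∀ x, μ x ≤ μ' x)
    (f f' : F) (hff' : f ≤ f')
    (g g' : Measure ℝ) [IsProbabilityMeasure g] [IsProbabilityMeasure g']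
    -- g' first-order stochastically dominates g
    (hgg' : ∀ (φ : ℝ → ℝ), Measurable φ → Monotone φ → (∃ C, ∀ z, |φ z| ≤ C) →
      ∫ z, φ z ∂g ≤ ∫ z, φ z ∂g')
    (hker : Measurable (fun x => P x (μ x) f))
    (hker' : Measurable (fun x => P x (μ' x) f')) :
    -- Q_{μ',f'}(g') ⪰_SD Q_{μ,f}(g)
    ∀ (φ : ℝ → ℝ), Measurable φ → Monotone φ → (∃ C, ∀ z, |φ z| ≤ C) →
      ∫ z, φ z ∂(g.bind (fun x => P x (μ x) f)) ≤
        ∫ z, φ z ∂(g'.bind (fun x => P x (μ' x) f')) := by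
  let κ : Kernel ℝ ℝ := ⟨fun x => P x (μ x) f, hker⟩
  let κ' : Kernel ℝ ℝ := ⟨fun x => P x (μ' x) f', hker'⟩
  have : IsMarkovKernel κ := ⟨fun x => hPprob x (μ x) f⟩
  have : IsMarkovKernel κ' := ⟨fun x => hPprob x (μ' x) f'⟩
  refine StochasticallyLE.bind (κ := κ) (κ' := κ') hgg' ?_ ?_
  · exact fun x φ hφ hφ_mono hφ_bdd =>
      hPmono φ hφ hφ_mono hφ_bdd x x _ _ f f' le_rfl (hμle x) hff'
  · exact fun x y hxy φ hφ hφ_mono hφ_bdd =>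
      hPmono φ hφ hφ_mono hφ_bdd x y _ _ f' f' hxy (hμ'mono hxy) le_rfl

theorem stmt_7 {A F : Type*} [PartialOrder A] [PartialOrder F]
    (X : Set ℝ) (hX : IsCompact X)
    (P : ℝ → A → F → Measure ℝ)
    (hPprob : ∀ x a f, IsProbabilityMeasure (P x a f))
    (hPsupp : ∀ x a f, P x a f Xᶜ = 0)
    -- stochastically nondecreasing in (x,a) jointly and in f
    (hPmono : ∀ (φ : ℝ → ℝ), Measurable φ → Monotone φ → (∃ C, ∀ z, |φ z| ≤ C) →
      ∀ (x x' : ℝ) (a a' : A) (f f' : F), x ≤ x' → a ≤ a' → f ≤ f' →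
        ∫ z, φ z ∂(P x a f) ≤ ∫ z, φ z ∂(P x' a' f'))
    (μ μ' : ℝ → A) (hμmono : Monotone μ) (hμ'mono : Monotone μ')
    (hμle : ∀ x, μ x ≤ μ' x)
    (f f' : F) (hff' : f ≤ f')
    (g g' : Measure ℝ) [IsProbabilityMeasure g] [IsProbabilityMeasure g']
    (hg : g Xᶜ = 0) (hg' : g' Xᶜ = 0)
    -- g' first-order stochastically dominates g
    (hgg' : ∀ (φ : ℝ → ℝ), Measurable φ → Monotone φ → (∃ C, ∀ z, |φ z| ≤ C) →
      ∫ z, φ z ∂g ≤ ∫ z, φ z ∂g')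
    (hker : Measurable (fun x => P x (μ x) f))
    (hker' : Measurable (fun x => P x (μ' x) f')) :
    -- Q_{μ',f'}(g') ⪰_SD Q_{μ,f}(g)
    ∀ (φ : ℝ → ℝ), Measurable φ → Monotone φ → (∃ C, ∀ z, |φ z| ≤ C) →
      ∫ z, φ z ∂(g.bind (fun x => P x (μ x) f)) ≤
        ∫ z, φ z ∂(g'.bind (fun x => P x (μ' x) f')) :=
  stmt_7_general P hPprob hPmono μ μ' hμ'mono hμle f f' hff' g g' hgg' hker hker'
end

section
/- Let A = [a̲, ā] be a compact real interval, c : A → ℝ convex and nondecreasing, and h : X × A → ℝ with X ⊆ ℝ, where h is nondecreasing in x and a, concave in a, and supermodular in (x,a). Define C(x,ĥ) = inf{c(a) : h(x,a) = ĥ}. Then C has decreasing differences in x and ĥ: for x' > x and ĥ' > ĥ with ĥ', ĥ ∈ H(x') ∩ H(x), C(x',ĥ') − C(x,ĥ') ≤ C(x',ĥ) − C(x,ĥ). -/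
/-!
Since `c` is monotone, `C(x, v)` is `c` at the least solution `a(x, v)` of `h x a = v`, which
exists by compactness. With `a₁ = a(x, hh)`, `a₂ = a(x, hh')`, `b₁ = a(x', hh)`, `b₂ = a(x', hh')`,
monotonicity in `x` and the intermediate value theorem give `b₁ ≤ a₁`, while concavity of `h x'`
and supermodularity give `h x' (b₁ + (a₂ - a₁)) ≥ hh'`, hence `b₂ - b₁ ≤ a₂ - a₁`. A monotone
convex `c` then increases less over `[b₁, b₂]` than over `[a₁, a₂]`.
-/

open Set

section Increments

variable {s : Set ℝ} {f : ℝ → ℝ}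

theorem ConvexOn.secant_le_secant (hf : ConvexOn ℝ s f) {b₁ b₂ a₁ a₂ : ℝ}
    (hb₁ : b₁ ∈ s) (hb₂ : b₂ ∈ s) (ha₁ : a₁ ∈ s) (ha₂ : a₂ ∈ s)
    (hba₁ : b₁ ≤ a₁) (hba₂ : b₂ ≤ a₂) (hb : b₁ < b₂) (ha : a₁ < a₂) :
    (f b₂ - f b₁) / (b₂ - b₁) ≤ (f a₂ - f a₁) / (a₂ - a₁) := by
  have hb₁a₂ : b₁ < a₂ := hba₁.trans_lt ha
  calc (f b₂ - f b₁) / (b₂ - b₁)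
      ≤ (f a₂ - f b₁) / (a₂ - b₁) := hf.secant_mono hb₁ hb₂ ha₂ hb.ne' hb₁a₂.ne' hba₂
    _ = (f b₁ - f a₂) / (b₁ - a₂) := by rw [← neg_div_neg_eq, neg_sub, neg_sub]
    _ ≤ (f a₁ - f a₂) / (a₁ - a₂) := hf.secant_mono ha₂ hb₁ ha₁ hb₁a₂.ne ha.ne hba₁
    _ = (f a₂ - f a₁) / (a₂ - a₁) := by rw [← neg_div_neg_eq, neg_sub, neg_sub]

theorem ConvexOn.map_add_sub_map_le (hf : ConvexOn ℝ s f) {x y d : ℝ} (hx : x ∈ s)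
    (hyd : y + d ∈ s) (hxy : x ≤ y) (hd : 0 ≤ d) :
    f (x + d) - f x ≤ f (y + d) - f y := by
  rcases hd.eq_or_lt with rfl | hd
  · simp
  rcases hxy.eq_or_lt with rfl | hxy
  · rfl
  have hy : y ∈ s := hf.1.ordConnected.out hx hyd ⟨hxy.le, by linarith⟩
  have hxd : x + d ∈ s := hf.1.ordConnected.out hx hyd ⟨by linarith, by linarith⟩
  have := hf.secant_le_secant hx hxd hy hyd hxy.le (by linarith) (by linarith) (by linarith)
  rw [add_sub_cancel_left, add_sub_cancel_left] at this
  exact (div_le_div_iff_of_pos_right hd).1 this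

theorem ConcaveOn.map_add_sub_map_le (hf : ConcaveOn ℝ s f) {x y d : ℝ} (hx : x ∈ s)
    (hyd : y + d ∈ s) (hxy : x ≤ y) (hd : 0 ≤ d) :
    f (y + d) - f y ≤ f (x + d) - f x := by
  have := hf.neg.map_add_sub_map_le hx hyd hxy hd
  simp only [Pi.neg_apply] at this
  linarith

theorem ConvexOn.map_sub_map_le_of_sub_le (hf : ConvexOn ℝ s f) (hmono : MonotoneOn f s)
    {b₁ b₂ a₁ a₂ : ℝ} (hb₁ : b₁ ∈ s) (hb₂ : b₂ ∈ s) (ha₂ : a₂ ∈ s)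
    (hba₁ : b₁ ≤ a₁) (hb : b₁ ≤ b₂) (hlen : b₂ - b₁ ≤ a₂ - a₁) :
    f b₂ - f b₁ ≤ f a₂ - f a₁ := by
  have hb₂' : b₁ + (a₂ - a₁) ∈ s := hf.1.ordConnected.out hb₁ ha₂ ⟨by linarith, by linarith⟩
  have hshift : f b₂ ≤ f (b₁ + (a₂ - a₁)) := hmono hb₂ hb₂' (by linarith)
  have := hf.map_add_sub_map_le (d := a₂ - a₁) hb₁ (by rwa [add_sub_cancel]) hba₁
    (by linarith)
  rw [add_sub_cancel] at this
  linarith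

end Increments

section LevelSets

variable {s : Set ℝ} {f : ℝ → ℝ} {v : ℝ}

theorem exists_isLeast_levelSet (hs : IsCompact s) (hf : ContinuousOn f s) (hv : v ∈ f '' s) :
    ∃ p, IsLeast {a ∈ s | f a = v} p := by
  have hcl : IsClosed (s ∩ f ⁻¹' {v}) :=
    hf.preimage_isClosed_of_isClosed hs.isClosed isClosed_singleton
  obtain ⟨a, ha, rfl⟩ := hv
  exact (hs.of_isClosed_subset hcl inter_subset_left).exists_isLeast ⟨a, ha, rfl⟩

theorem IsLeast.le_of_intermediate_value {p l a : ℝ} (hp : IsLeast {b ∈ s | f b = v} p)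
    (hsub : Icc l a ⊆ s) (hf : ContinuousOn f (Icc l a)) (hla : l ≤ a)
    (hl : f l ≤ v) (ha : v ≤ f a) : p ≤ a := by
  obtain ⟨b, hb, hfb⟩ := intermediate_value_Icc hla hf ⟨hl, ha⟩
  exact (hp.2 ⟨hsub hb, hfb⟩).trans hb.2

theorem IsLeast.csInf_image_eq {c : ℝ → ℝ} {p : ℝ} (hc : MonotoneOn c s)
    (hp : IsLeast {a ∈ s | f a = v} p) : sInf (c '' {a ∈ s | f a = v}) = c p :=
  ((hc.mono (sep_subset _ _)).map_isLeast hp).csInf_eq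

theorem IsLeast.le_of_levelSet_of_le {aL aU p q : ℝ} {g : ℝ → ℝ}
    (hg : ContinuousOn g (Icc aL aU)) (hgmono : MonotoneOn g (Icc aL aU))
    (hp : IsLeast {a ∈ Icc aL aU | g a = v} p) (hq : IsLeast {a ∈ Icc aL aU | f a = v} q)
    (hfg : f q ≤ g q) : p ≤ q := by
  have hq' := hq.1.1
  refine hp.le_of_intermediate_value (Icc_subset_Icc_right hq'.2)
    (hg.mono (Icc_subset_Icc_right hq'.2)) hq'.1 ?_ (hq.1.2 ▸ hfg)
  rw [← hp.1.2]
  exact hgmono (left_mem_Icc.2 (hq'.1.trans hq'.2)) hp.1.1 hp.1.1.1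

end LevelSets

theorem stmt_13_general (X : Set ℝ) (aL aU : ℝ)
    (c : ℝ → ℝ) (hcconv : ConvexOn ℝ (Icc aL aU) c) (hcmono : MonotoneOn c (Icc aL aU))
    (h : ℝ → ℝ → ℝ)
    (hcont : ∀ x ∈ X, ContinuousOn (h x) (Icc aL aU))
    (hconc : ∀ x ∈ X, ConcaveOn ℝ (Icc aL aU) (h x))
    (hmonoa : ∀ x ∈ X, MonotoneOn (h x) (Icc aL aU))
    (hmonox : ∀ a ∈ Icc aL aU, ∀ x ∈ X, ∀ x' ∈ X, x ≤ x' → h x a ≤ h x' a)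
    -- supermodular in (x,a)
    (hsm : ∀ x ∈ X, ∀ x' ∈ X, x ≤ x' → ∀ a ∈ Icc aL aU, ∀ a' ∈ Icc aL aU, a ≤ a' →
      h x' a + h x a' ≤ h x' a' + h x a) :
    -- C has decreasing differences in x and hh
    ∀ x ∈ X, ∀ x' ∈ X, x < x' →
      ∀ hh ∈ (h x '' Icc aL aU) ∩ (h x' '' Icc aL aU),
      ∀ hh' ∈ (h x '' Icc aL aU) ∩ (h x' '' Icc aL aU), hh < hh' →
        sInf (c '' {a ∈ Icc aL aU | h x' a = hh'}) -
            sInf (c '' {a ∈ Icc aL aU | h x a = hh'}) ≤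
          sInf (c '' {a ∈ Icc aL aU | h x' a = hh}) -
            sInf (c '' {a ∈ Icc aL aU | h x a = hh}) := by
  intro x hx x' hx' hxx' hh hhm hh' hh'm hhh'
  obtain ⟨a₁, ha₁⟩ := exists_isLeast_levelSet isCompact_Icc (hcont x hx) hhm.1
  obtain ⟨a₂, ha₂⟩ := exists_isLeast_levelSet isCompact_Icc (hcont x hx) hh'm.1
  obtain ⟨b₁, hb₁⟩ := exists_isLeast_levelSet isCompact_Icc (hcont x' hx') hhm.2
  obtain ⟨b₂, hb₂⟩ := exists_isLeast_levelSet isCompact_Icc (hcont x' hx') hh'm.2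
  rw [ha₁.csInf_image_eq hcmono, ha₂.csInf_image_eq hcmono, hb₁.csInf_image_eq hcmono,
    hb₂.csInf_image_eq hcmono]
  have ha₁₂ : a₁ < a₂ := (hmonoa x hx).reflect_lt ha₁.1.1 ha₂.1.1 (by rwa [ha₁.1.2, ha₂.1.2])
  have hba₁ : b₁ ≤ a₁ := hb₁.le_of_levelSet_of_le (hcont x' hx') (hmonoa x' hx') ha₁
    (hmonox a₁ ha₁.1.1 x hx x' hx' hxx'.le)
  have hta₂ : b₁ + (a₂ - a₁) ≤ a₂ := by linarith
  have htI : b₁ + (a₂ - a₁) ∈ Icc aL aU := ⟨by linarith [hb₁.1.1.1], hta₂.trans ha₂.1.1.2⟩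
  have hreach : hh' ≤ h x' (b₁ + (a₂ - a₁)) := by
    have hconcinc := (hconc x' hx').map_add_sub_map_le (d := a₂ - a₁) hb₁.1.1
      (by rw [add_sub_cancel]; exact ha₂.1.1) hba₁ (by linarith)
    rw [add_sub_cancel] at hconcinc
    have := hsm x hx x' hx' hxx'.le a₁ ha₁.1.1 a₂ ha₂.1.1 ha₁₂.le
    linarith [ha₁.1.2, ha₂.1.2, hb₁.1.2]
  have hb₂t : b₂ ≤ b₁ + (a₂ - a₁) :=
    hb₂.le_of_intermediate_value (Icc_subset_Icc hb₁.1.1.1 htI.2)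
      ((hcont x' hx').mono (Icc_subset_Icc hb₁.1.1.1 htI.2)) (by linarith)
      (by rw [hb₁.1.2]; exact hhh'.le) hreach
  have := hcconv.map_sub_map_le_of_sub_le hcmono hb₁.1.1 hb₂.1.1 ha₂.1.1 hba₁
    ((hmonoa x' hx').reflect_lt hb₁.1.1 hb₂.1.1 (by rwa [hb₁.1.2, hb₂.1.2])).le (by linarith)
  linarith

theorem stmt_13 (X : Set ℝ) (aL aU : ℝ) (haa : aL ≤ aU)
    (c : ℝ → ℝ) (hcconv : ConvexOn ℝ (Icc aL aU) c) (hcmono : MonotoneOn c (Icc aL aU))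
    (hccont : ContinuousOn c (Icc aL aU))
    (h : ℝ → ℝ → ℝ)
    (hcont : ∀ x ∈ X, ContinuousOn (h x) (Icc aL aU))
    (hconc : ∀ x ∈ X, ConcaveOn ℝ (Icc aL aU) (h x))
    (hmonoa : ∀ x ∈ X, MonotoneOn (h x) (Icc aL aU))
    (hmonox : ∀ a ∈ Icc aL aU, ∀ x ∈ X, ∀ x' ∈ X, x ≤ x' → h x a ≤ h x' a)
    -- supermodular in (x,a)
    (hsm : ∀ x ∈ X, ∀ x' ∈ X, x ≤ x' → ∀ a ∈ Icc aL aU, ∀ a' ∈ Icc aL aU, a ≤ a' →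
      h x' a + h x a' ≤ h x' a' + h x a) :
    -- C has decreasing differences in x and hh
    ∀ x ∈ X, ∀ x' ∈ X, x < x' →
      ∀ hh ∈ (h x '' Icc aL aU) ∩ (h x' '' Icc aL aU),
      ∀ hh' ∈ (h x '' Icc aL aU) ∩ (h x' '' Icc aL aU), hh < hh' →
        sInf (c '' {a ∈ Icc aL aU | h x' a = hh'}) -
            sInf (c '' {a ∈ Icc aL aU | h x a = hh'}) ≤
          sInf (c '' {a ∈ Icc aL aU | h x' a = hh}) -
            sInf (c '' {a ∈ Icc aL aU | h x a = hh}) :=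
  stmt_13_general X aL aU c hcconv hcmono h hcont hconc hmonoa hmonox hsm
end

section
/- Let X = [−M, M] with M > 1 and define the truncated linear kernel P(x'|x,a) induced by x' = median(−M, Ax + Ba + W, M) with A, B > 0 and W uniform on {−1, +1}. Then there exists a bounded nondecreasing function φ : X → ℝ and points x, a such that E[φ(x')|x,a] fails to have increasing differences in x and a. -/
/-!
Move `x` and `a` so that `A x` and `B a` each grow by the same `p`: increasing differences
then forces the midpoint convexity `g p + g (-p) ≥ 2 g 0` of `g y = E[φ(clip(y + W))]`.
For the step `φ = 1_{[1, ∞)}`, whose threshold lies inside `(-M, M]` so that clipping does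
not change it, `g` is the staircase with values `0, ½, 1` and jumps at `y = 0` and `y = 2`;
for `0 < p < 2` it gives `g (-p) = 0` and `g 0 = g p = ½`.
-/

open Set

lemma le_max_neg_min_iff {M t v : ℝ} (h₁ : -M < t) (h₂ : t ≤ M) :
    t ≤ max (-M) (min M v) ↔ t ≤ v := by
  simp only [le_max_iff, le_min_iff]
  constructor
  · rintro (h | ⟨-, h⟩)
    · exact absurd h (not_le.mpr h₁)
    · exact h
  · exact fun h => Or.inr ⟨h₂, h⟩

noncomputable def threshold (t z : ℝ) : ℝ := if t ≤ z then 1 else 0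

lemma monotone_threshold (t : ℝ) : Monotone (threshold t) := by
  intro z w hzw
  by_cases hw : t ≤ w
  · simp only [threshold, hw, if_true]
    split_ifs <;> norm_num
  · have hz : ¬ t ≤ z := fun hz => hw (hz.trans hzw)
    simp only [threshold, hw, hz, if_false, le_refl]

lemma abs_threshold_le_one (t z : ℝ) : |threshold t z| ≤ 1 := by
  unfold threshold
  split_ifs <;> norm_num

noncomputable def expectedThreshold (t y : ℝ) : ℝ :=
  (threshold t (y + 1) + threshold t (y - 1)) / 2

lemma expectedThreshold_clip {M t : ℝ} (h₁ : -M < t) (h₂ : t ≤ M) (y : ℝ) :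
    (threshold t (max (-M) (min M (y + 1))) + threshold t (max (-M) (min M (y - 1)))) / 2 =
      expectedThreshold t y := by
  simp only [threshold, expectedThreshold, le_max_neg_min_iff h₁ h₂]

lemma expectedThreshold_of_lt {t y : ℝ} (hy : y < t - 1) : expectedThreshold t y = 0 := by
  have h_plus : ¬ t ≤ y + 1 := by linarith
  have h_minus : ¬ t ≤ y - 1 := by linarith
  simp only [expectedThreshold, threshold, h_plus, h_minus, if_false]
  norm_num

lemma expectedThreshold_of_mem_Ico {t y : ℝ} (hy : y ∈ Ico (t - 1) (t + 1)) :
    expectedThreshold t y = 1 / 2 := by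
  have h_plus : t ≤ y + 1 := by linarith [hy.1]
  have h_minus : ¬ t ≤ y - 1 := by linarith [hy.2]
  simp only [expectedThreshold, threshold, h_plus, h_minus, if_true, if_false]
  norm_num

theorem stmt_17 (M A B : ℝ) (hM : 1 < M) (hA : 0 < A) (hB : 0 < B) :
    ∃ φ : ℝ → ℝ, Monotone φ ∧ (∃ C, ∀ z, |φ z| ≤ C) ∧
      ∃ x x' a a' : ℝ, x ∈ Icc (-M) M ∧ x' ∈ Icc (-M) M ∧ x ≤ x' ∧ a ≤ a' ∧
        -- E[φ(x_next)|x,a] = ½ φ(clip(Ax+Ba+1)) + ½ φ(clip(Ax+Ba−1)) fails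
        -- increasing differences in x and a:
        (φ (max (-M) (min M (A * x' + B * a' + 1))) +
            φ (max (-M) (min M (A * x' + B * a' - 1)))) / 2 -
          (φ (max (-M) (min M (A * x' + B * a + 1))) +
            φ (max (-M) (min M (A * x' + B * a - 1)))) / 2 <
        (φ (max (-M) (min M (A * x + B * a' + 1))) +
            φ (max (-M) (min M (A * x + B * a' - 1)))) / 2 -
          (φ (max (-M) (min M (A * x + B * a + 1))) +
            φ (max (-M) (min M (A * x + B * a - 1)))) / 2 := by
  set x' := 1 / (A + 1) with hx'
  set p := A * x' with hp
  have hx'_pos : 0 < x' := by positivity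
  have hx'_le_one : x' ≤ 1 := by rw [hx', div_le_one (by linarith)]; linarith
  have hp_pos : 0 < p := mul_pos hA hx'_pos
  have hp_lt_two : p < 2 := by
    rw [hp, hx', mul_one_div, div_lt_iff₀ (by linarith)]
    linarith
  have hBa : B * (-p / B) = -p := mul_div_cancel₀ _ hB.ne'
  refine ⟨threshold 1, monotone_threshold 1, ⟨1, abs_threshold_le_one 1⟩, 0, x', -p / B, 0,
    ⟨by linarith, by linarith⟩, ⟨by linarith, by linarith⟩, hx'_pos.le,
    div_nonpos_of_nonpos_of_nonneg (by linarith) hB.le, ?_⟩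
  simp only [expectedThreshold_clip (by linarith : -M < 1) hM.le]
  simp only [hBa, ← hp, mul_zero, add_zero, zero_add, add_neg_cancel]
  have g_neg : expectedThreshold 1 (-p) = 0 := expectedThreshold_of_lt (by linarith)
  have g_zero : expectedThreshold 1 0 = 1 / 2 :=
    expectedThreshold_of_mem_Ico ⟨by norm_num, by norm_num⟩
  have g_pos : expectedThreshold 1 p = 1 / 2 :=
    expectedThreshold_of_mem_Ico ⟨by linarith, by linarith⟩
  rw [g_neg, g_zero, g_pos]
  norm_num
end
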